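/- arXiv:2205.00343 — 4 statements merged into one kernel-verified Lean document; each statement's English description precedes it below -/
import Mathlib

section
/- Let X and Y be Polish spaces, P, Q ∈ P(X), and f : X → Y a Borel map. Then the pushforward under f × f of the set of couplings of P and Q equals the set of couplings of the pushforwards: (f × f)_# Π(P,Q) = Π(f_#P, f_#Q). -/
open MeasureTheory
open scoped ENNReal

noncomputable section

def couplings {X : Type*} [MeasurableSpace X] (P Q : Measure X) :
    Set (Measure (X × X)) :=
  {γ | IsProbabilityMeasure γ ∧ γ.map Prod.fst = P ∧ γ.map Prod.snd = Q}

/-!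
A coupling pushed forward by `f × f` is clearly a coupling of the pushforwards. Conversely,
since `X` is standard Borel, `P` disintegrates along `f`: there is a Markov kernel `κ` from `Y`
to `X` with `κ ∘ f_# P = P` whose measure at `y` lives on the fibre `f ⁻¹' {y}` (the conditional
law of `x` given `f x`); likewise `η` for `Q`. Given `γ ∈ Π(f_# P, f_# Q)`, draw `(y₁, y₂) ∼ γ`
and then independently `x₁ ∼ κ y₁`, `x₂ ∼ η y₂`. The law of `(x₁, x₂)` has marginals `P` and `Q`,
and since `f xᵢ = yᵢ` almost surely, `f × f` maps it back to `γ`.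
-/

open ProbabilityTheory

namespace MeasureTheory.Measure

section ParallelComp

variable {α β γ δ : Type*} [MeasurableSpace α] [MeasurableSpace β] [MeasurableSpace γ]
  [MeasurableSpace δ]

lemma comp_map_eq_comap_comp (μ : Measure α) (κ : Kernel β γ) {f : α → β} (hf : Measurable f) :
    κ ∘ₘ μ.map f = κ.comap f hf ∘ₘ μ := by
  rw [← Measure.deterministic_comp_eq_map hf, Measure.comp_assoc,
    Kernel.comp_deterministic_eq_comap]

lemma fst_parallelComp_comp (μ : Measure (α × γ)) (κ : Kernel α β) [IsSFiniteKernel κ]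
    (η : Kernel γ δ) [IsMarkovKernel η] :
    ((κ ∥ₖ η) ∘ₘ μ).fst = κ ∘ₘ μ.fst := by
  have h_map : (κ ∥ₖ η).map Prod.fst = κ.comap Prod.fst measurable_fst := by
    ext1 p
    simp [Kernel.map_apply _ measurable_fst, Kernel.parallelComp_apply]
  rw [Measure.fst, Measure.map_comp _ _ measurable_fst, h_map, Measure.fst,
    comp_map_eq_comap_comp]

lemma snd_parallelComp_comp (μ : Measure (α × γ)) (κ : Kernel α β) [IsMarkovKernel κ]
    (η : Kernel γ δ) [IsSFiniteKernel η] :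
    ((κ ∥ₖ η) ∘ₘ μ).snd = η ∘ₘ μ.snd := by
  have h_map : (κ ∥ₖ η).map Prod.snd = η.comap Prod.snd measurable_snd := by
    ext1 p
    simp [Kernel.map_apply _ measurable_snd, Kernel.parallelComp_apply]
  rw [Measure.snd, Measure.map_comp _ _ measurable_snd, h_map, Measure.snd,
    comp_map_eq_comap_comp]

lemma map_prodMap_parallelComp_comp (μ : Measure (α × γ)) (κ : Kernel α β) [IsSFiniteKernel κ]
    (η : Kernel γ δ) [IsSFiniteKernel η] {f : β → α} {g : δ → γ} (hf : Measurable f)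
    (hg : Measurable g) (hκ : ∀ᵐ a ∂μ.fst, (κ a).map f = .dirac a)
    (hη : ∀ᵐ c ∂μ.snd, (η c).map g = .dirac c) :
    ((κ ∥ₖ η) ∘ₘ μ).map (Prod.map f g) = μ := by
  rw [Measure.map_comp _ _ (hf.prodMap hg)]
  conv_rhs => rw [← Measure.id_comp (μ := μ)]
  refine Measure.comp_congr ?_
  filter_upwards [ae_of_ae_map measurable_fst.aemeasurable hκ,
    ae_of_ae_map measurable_snd.aemeasurable hη] with p hp1 hp2
  rw [Kernel.map_apply _ (hf.prodMap hg), Kernel.parallelComp_apply,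
    ← Measure.map_prod_map _ _ hf hg, hp1, hp2, Measure.dirac_prod_dirac, Kernel.id_apply]

end ParallelComp

lemma map_eq_dirac_of_ae_eq {α β : Type*} [MeasurableSpace α]
    [MeasurableSpace β] {ν : Measure α} [IsProbabilityMeasure ν] {f : α → β} {b : β}
    (h : ∀ᵐ x ∂ν, f x = b) : ν.map f = .dirac b := by
  rw [Measure.map_congr h, Measure.map_const, measure_univ, one_smul]

section FiberKernel

variable {X Y : Type*} [MeasurableSpace X] [StandardBorelSpace X] [Nonempty X]
  [MeasurableSpace Y] [MeasurableEq Y]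

theorem exists_kernel_comp_map_eq_self_ae_map_eq_dirac (μ : Measure X) [IsFiniteMeasure μ]
    {f : X → Y} (hf : Measurable f) :
    ∃ κ : Kernel Y X, IsMarkovKernel κ ∧ κ ∘ₘ μ.map f = μ ∧
      ∀ᵐ y ∂μ.map f, (κ y).map f = .dirac y := by
  set ρ : Measure (Y × X) := μ.map fun x => (f x, x)
  have hρ_fst : ρ.fst = μ.map f := Measure.fst_map_prodMk measurable_id
  have hρ : ρ.fst ⊗ₘ ρ.condKernel = ρ := ρ.disintegrate ρ.condKernel
  refine ⟨ρ.condKernel, inferInstance, ?_, ?_⟩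
  · rw [← hρ_fst, ← Measure.snd_compProd, hρ, Measure.snd_map_prodMk hf, Measure.map_id']
  · -- `ρ` lives on the graph of `f`, which is measurable because `Y` has a measurable diagonal.
    have h_graph : ∀ᵐ z ∂ρ, f z.2 = z.1 :=
      (ae_map_iff (hf.prodMk measurable_id).aemeasurable
        (measurableSet_eq_fun (hf.comp measurable_snd) measurable_fst)).2 (ae_of_all _ fun _ ↦ rfl)
    rw [← hρ] at h_graph
    rw [← hρ_fst]
    filter_upwards [Measure.ae_ae_of_ae_compProd h_graph] with y hy
    exact Measure.map_eq_dirac_of_ae_eq hy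

end FiberKernel

end MeasureTheory.Measure

section Couplings

variable {X Y : Type*} [MeasurableSpace X] [MeasurableSpace Y] {f : X → Y}

lemma map_prodMap_mem_couplings (hf : Measurable f) {P Q : Measure X} {γ : Measure (X × X)}
    (hγ : γ ∈ couplings P Q) : γ.map (Prod.map f f) ∈ couplings (P.map f) (Q.map f) := by
  obtain ⟨_, hγ_fst, hγ_snd⟩ := hγ
  refine ⟨Measure.isProbabilityMeasure_map (hf.prodMap hf).aemeasurable, ?_, ?_⟩
  · rw [Measure.map_map measurable_fst (hf.prodMap hf), ← hγ_fst,
      Measure.map_map hf measurable_fst]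
    rfl
  · rw [Measure.map_map measurable_snd (hf.prodMap hf), ← hγ_snd,
      Measure.map_map hf measurable_snd]
    rfl

theorem exists_mem_couplings_map_prodMap_eq [StandardBorelSpace X] [MeasurableEq Y]
    (hf : Measurable f) {P Q : Measure X} [IsProbabilityMeasure P] [IsProbabilityMeasure Q]
    {γ : Measure (Y × Y)} (hγ : γ ∈ couplings (P.map f) (Q.map f)) :
    ∃ η ∈ couplings P Q, η.map (Prod.map f f) = γ := by
  obtain ⟨_, hγ_fst, hγ_snd⟩ := hγ
  have : Nonempty X := nonempty_of_isProbabilityMeasure P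
  obtain ⟨κ, _, hκ_comp, hκ_fiber⟩ := Measure.exists_kernel_comp_map_eq_self_ae_map_eq_dirac P hf
  obtain ⟨η, _, hη_comp, hη_fiber⟩ := Measure.exists_kernel_comp_map_eq_self_ae_map_eq_dirac Q hf
  change γ.fst = _ at hγ_fst
  change γ.snd = _ at hγ_snd
  refine ⟨(κ ∥ₖ η) ∘ₘ γ, ⟨inferInstance, ?_, ?_⟩, ?_⟩
  · rw [← hκ_comp, ← hγ_fst]
    exact Measure.fst_parallelComp_comp γ κ η
  · rw [← hη_comp, ← hγ_snd]
    exact Measure.snd_parallelComp_comp γ κ η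
  · rw [← hγ_fst] at hκ_fiber
    rw [← hγ_snd] at hη_fiber
    exact Measure.map_prodMap_parallelComp_comp γ κ η hf hf hκ_fiber hη_fiber

end Couplings

/-- Pushforward of the set of couplings via `f × f` equals the set of couplings of
the pushforwards. -/
theorem pushforward_couplings
    {X Y : Type*}
    [MeasurableSpace X] [TopologicalSpace X] [PolishSpace X] [BorelSpace X]
    [MeasurableSpace Y] [TopologicalSpace Y] [PolishSpace Y] [BorelSpace Y]
    (P Q : Measure X) [IsProbabilityMeasure P] [IsProbabilityMeasure Q]
    (f : X → Y) (hf : Measurable f) :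
    (fun γ => γ.map (Prod.map f f)) '' couplings P Q
      = couplings (P.map f) (Q.map f) := by
  ext γ
  constructor
  · rintro ⟨η, hη, rfl⟩
    exact map_prodMap_mem_couplings hf hη
  · exact exists_mem_couplings_map_prodMap_eq hf

end
end

section
/- Let X ∈ ℝ^{n×n} and Y ∈ ℝ^{m×m} be symmetric positive definite matrices, let A ∈ ℝ^{m×n}, and let A⁺ ∈ ℝ^{n×m} satisfy the Moore–Penrose conditions with respect to the inner products ⟨u,v⟩_X = uᵀXv on ℝⁿ and ⟨u,v⟩_Y = uᵀYv on ℝᵐ: A A⁺ A = A, A⁺ A A⁺ = A⁺, X(A⁺A) = (A⁺A)ᵀX, and Y(AA⁺) = (AA⁺)ᵀY. Let ĉ : ℝⁿ → [0,∞] be Borel and orthomonotone with respect to ⟨·,·⟩_X, i.e., ĉ(x₁ + x₂) ≥ ĉ(x₁) whenever x₁ᵀXx₂ = 0, and consider the translation-invariant cost c(x₁,x₂) = ĉ(x₁ − x₂). Then for every P ∈ P(ℝⁿ) and ε ≥ 0: A_# B_ε^ĉ(P) ⊆ (AA⁺)_# B_ε^{ĉ∘A⁺}(A_#P) = A_# B_ε^ĉ((A⁺A)_#P)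 ⊆ B_ε^{ĉ∘A⁺}(A_#P), where ĉ∘A⁺ is the translation-invariant cost on ℝᵐ given by (y₁,y₂) ↦ ĉ(A⁺y₁ − A⁺y₂), and A_# denotes pushforward under the linear map x ↦ Ax. -/
/-!
Since `X (A⁺A) = (A⁺A)ᵀ X` and `A⁺A` is idempotent, `A⁺A` is an `X`-orthogonal projection:
`A⁺A z` is `X`-orthogonal to `z - A⁺A z`, so an orthomonotone cost satisfies `ĉ (A⁺A z) ≤ ĉ z`.
Hence `x ↦ Ax` does not increase the cost when passing from `ĉ` to `ĉ ∘ A⁺`, while `y ↦ A⁺y`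
preserves it; pushing couplings forward along these maps moves ambiguity sets into ambiguity
sets of the same radius, and `AA⁺A = A` identifies the resulting pushforwards.
-/

open MeasureTheory Matrix
open scoped ENNReal

noncomputable section

/-- Optimal transport discrepancy with transportation cost `c`. -/
def OTCost {X : Type*} [MeasurableSpace X] (c : X × X → ℝ≥0∞) (P Q : Measure X) : ℝ≥0∞ :=
  ⨅ γ ∈ couplings P Q, ∫⁻ x, c x ∂γ

/-- The optimal transport ambiguity set of radius `ε` around `P`, for cost `c`. -/
def ambiguitySet {X : Type*} [MeasurableSpace X] (c : X × X → ℝ≥0∞) (ε : ℝ≥0∞)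
    (P : Measure X) : Set (Measure X) :=
  {Q | IsProbabilityMeasure Q ∧ OTCost c P Q ≤ ε}

section Orthomonotone

variable {ι R : Type*} [Fintype ι] [CommRing R]

def Orthomonotone {β : Type*} [Preorder β] (X : Matrix ι ι R) (c : (ι → R) → β) : Prop :=
  ∀ x₁ x₂ : ι → R, x₁ ⬝ᵥ X *ᵥ x₂ = 0 → c x₁ ≤ c (x₁ + x₂)

theorem dotProduct_mulVec_sub_mulVec_eq_zero {M X : Matrix ι ι R} (hM : M * M = M)
    (hXM : X * M = Mᵀ * X) (z : ι → R) : M *ᵥ z ⬝ᵥ X *ᵥ (z - M *ᵥ z) = 0 :=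
  calc M *ᵥ z ⬝ᵥ X *ᵥ (z - M *ᵥ z) = z ⬝ᵥ (Mᵀ * X) *ᵥ (z - M *ᵥ z) := by
        rw [← mulVec_mulVec, dotProduct_transpose_mulVec, dotProduct_comm]
    _ = z ⬝ᵥ X *ᵥ (M *ᵥ z - (M * M) *ᵥ z) := by
        rw [← hXM, ← mulVec_mulVec, mulVec_sub, mulVec_mulVec]
    _ = 0 := by rw [hM, sub_self, mulVec_zero, dotProduct_zero]

theorem Orthomonotone.apply_mulVec_le {β : Type*} [Preorder β] {X M : Matrix ι ι R}
    {c : (ι → R) → β} (hc : Orthomonotone X c) (hM : M * M = M) (hXM : X * M = Mᵀ * X)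
    (z : ι → R) : c (M *ᵥ z) ≤ c z := by
  simpa using hc _ _ (dotProduct_mulVec_sub_mulVec_eq_zero hM hXM z)

end Orthomonotone

theorem Matrix.measurable_mulVec {ι κ : Type*} [Fintype ι] [Fintype κ] (A : Matrix ι κ ℝ) :
    Measurable A.mulVec :=
  (continuous_const.matrix_mulVec continuous_id).measurable

theorem Matrix.map_mulVec_map_mulVec {ι κ o : Type*} [Fintype ι] [Fintype κ] [Fintype o]
    (A : Matrix ι κ ℝ) (B : Matrix κ o ℝ) (P : Measure (o → ℝ)) :
    (P.map B.mulVec).map A.mulVec = P.map (A * B).mulVec := by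
  rw [Measure.map_map A.measurable_mulVec B.measurable_mulVec]
  exact congrArg P.map (funext fun z => mulVec_mulVec z A B)

section Transport

variable {α β : Type*} [MeasurableSpace α] [MeasurableSpace β] {f : α → β}

theorem map_mem_couplings (hf : Measurable f) {P Q : Measure α} {γ : Measure (α × α)}
    (hγ : γ ∈ couplings P Q) : γ.map (Prod.map f f) ∈ couplings (P.map f) (Q.map f) := by
  obtain ⟨hprob, hfst, hsnd⟩ := hγ
  have hff : Measurable (Prod.map f f) := hf.prodMap hf
  refine ⟨Measure.isProbabilityMeasure_map hff.aemeasurable, ?_, ?_⟩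
  · rw [Measure.map_map measurable_fst hff, ← hfst, Measure.map_map hf measurable_fst]
    rfl
  · rw [Measure.map_map measurable_snd hff, ← hsnd, Measure.map_map hf measurable_snd]
    rfl

theorem OTCost_map_le (hf : Measurable f) {c₁ : α × α → ℝ≥0∞} {c₂ : β × β → ℝ≥0∞}
    (hc : ∀ x₁ x₂, c₂ (f x₁, f x₂) ≤ c₁ (x₁, x₂)) (P Q : Measure α) :
    OTCost c₂ (P.map f) (Q.map f) ≤ OTCost c₁ P Q :=
  le_iInf₂ fun γ hγ =>
    calc OTCost c₂ (P.map f) (Q.map f)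
        ≤ ∫⁻ y, c₂ y ∂(γ.map (Prod.map f f)) := iInf₂_le _ (map_mem_couplings hf hγ)
      _ ≤ ∫⁻ x, c₂ (Prod.map f f x) ∂γ := lintegral_map_le _ _
      _ ≤ ∫⁻ x, c₁ x ∂γ := lintegral_mono fun x => hc x.1 x.2

theorem image_map_ambiguitySet_subset (hf : Measurable f) {c₁ : α × α → ℝ≥0∞}
    {c₂ : β × β → ℝ≥0∞} (hc : ∀ x₁ x₂, c₂ (f x₁, f x₂) ≤ c₁ (x₁, x₂)) (ε : ℝ≥0∞)
    (P : Measure α) :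
    (fun Q => Q.map f) '' ambiguitySet c₁ ε P ⊆ ambiguitySet c₂ ε (P.map f) := by
  rintro _ ⟨Q, ⟨hQ, hQε⟩, rfl⟩
  exact ⟨Measure.isProbabilityMeasure_map hf.aemeasurable, (OTCost_map_le hf hc P Q).trans hQε⟩

end Transport

theorem pushforward_ambiguity_linear_chain_general
    {n m : ℕ}
    (X : Matrix (Fin n) (Fin n) ℝ)
    (A : Matrix (Fin m) (Fin n) ℝ) (Ap : Matrix (Fin n) (Fin m) ℝ)
    (h1 : A * Ap * A = A)
    (h3 : X * (Ap * A) = (Ap * A)ᵀ * X)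
    (cc : (Fin n → ℝ) → ℝ≥0∞)
    (hortho : ∀ x₁ x₂ : Fin n → ℝ, x₁ ⬝ᵥ X.mulVec x₂ = 0 → cc x₁ ≤ cc (x₁ + x₂))
    (P : Measure (Fin n → ℝ)) (ε : ℝ≥0∞) :
    ((fun μ => μ.map A.mulVec) '' ambiguitySet (fun x => cc (x.1 - x.2)) ε P
        ⊆ (fun μ => μ.map (A * Ap).mulVec) ''
            ambiguitySet (fun y => cc (Ap.mulVec y.1 - Ap.mulVec y.2)) ε (P.map A.mulVec))
      ∧ ((fun μ => μ.map (A * Ap).mulVec) ''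
            ambiguitySet (fun y => cc (Ap.mulVec y.1 - Ap.mulVec y.2)) ε (P.map A.mulVec)
          = (fun μ => μ.map A.mulVec) ''
              ambiguitySet (fun x => cc (x.1 - x.2)) ε (P.map (Ap * A).mulVec))
      ∧ ((fun μ => μ.map A.mulVec) ''
            ambiguitySet (fun x => cc (x.1 - x.2)) ε (P.map (Ap * A).mulVec)
          ⊆ ambiguitySet (fun y => cc (Ap.mulVec y.1 - Ap.mulVec y.2)) ε (P.map A.mulVec)) := by
  have hidem : Ap * A * (Ap * A) = Ap * A := by
    rw [Matrix.mul_assoc, ← Matrix.mul_assoc A, h1]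
  have hcostA : ∀ x₁ x₂, cc (Ap *ᵥ (A *ᵥ x₁) - Ap *ᵥ (A *ᵥ x₂)) ≤ cc (x₁ - x₂) := by
    intro x₁ x₂
    rw [mulVec_mulVec, mulVec_mulVec, ← mulVec_sub]
    exact Orthomonotone.apply_mulVec_le hortho hidem h3 _
  have hpushA := image_map_ambiguitySet_subset (c₁ := fun x => cc (x.1 - x.2))
    (c₂ := fun y => cc (Ap *ᵥ y.1 - Ap *ᵥ y.2)) A.measurable_mulVec hcostA ε
  have hfix : ∀ S : Set (Measure (Fin n → ℝ)), ∀ ν ∈ (fun μ => μ.map A.mulVec) '' S,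
      ν.map (A * Ap).mulVec = ν := by
    rintro S _ ⟨Q, -, rfl⟩
    rw [map_mulVec_map_mulVec, h1]
  have hprojected := hpushA (P.map (Ap * A).mulVec)
  rw [map_mulVec_map_mulVec, ← Matrix.mul_assoc, h1] at hprojected
  refine ⟨fun ν hν => ⟨ν, hpushA P hν, hfix _ ν hν⟩, ?_, hprojected⟩
  refine subset_antisymm ?_ fun ν hν => ⟨ν, hprojected hν, hfix _ ν hν⟩
  rintro _ ⟨Q, hQ, rfl⟩
  refine ⟨Q.map Ap.mulVec, ?_, map_mulVec_map_mulVec A Ap Q⟩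
  rw [← map_mulVec_map_mulVec]
  exact image_map_ambiguitySet_subset Ap.measurable_mulVec (fun _ _ => le_rfl) ε _ ⟨Q, hQ, rfl⟩

/-- Propagation of OT ambiguity sets under an arbitrary linear map, for a
translation-invariant orthomonotone transportation cost: the chain of inclusions
`A_# B_ε^ĉ(P) ⊆ (AA⁺)_# B_ε^{ĉ∘A⁺}(A_#P) = A_# B_ε^ĉ((A⁺A)_#P) ⊆ B_ε^{ĉ∘A⁺}(A_#P)`. -/
theorem pushforward_ambiguity_linear_chain
    {n m : ℕ}
    (X : Matrix (Fin n) (Fin n) ℝ) (Y : Matrix (Fin m) (Fin m) ℝ)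
    (hX : X.PosDef) (hY : Y.PosDef)
    (A : Matrix (Fin m) (Fin n) ℝ) (Ap : Matrix (Fin n) (Fin m) ℝ)
    (h1 : A * Ap * A = A) (h2 : Ap * A * Ap = Ap)
    (h3 : X * (Ap * A) = (Ap * A)ᵀ * X)
    (h4 : Y * (A * Ap) = (A * Ap)ᵀ * Y)
    (cc : (Fin n → ℝ) → ℝ≥0∞) (hcc : Measurable cc)
    (hortho : ∀ x₁ x₂ : Fin n → ℝ, x₁ ⬝ᵥ X.mulVec x₂ = 0 → cc x₁ ≤ cc (x₁ + x₂))
    (P : Measure (Fin n → ℝ)) [IsProbabilityMeasure P] (ε : ℝ≥0∞) :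
    ((fun μ => μ.map A.mulVec) '' ambiguitySet (fun x => cc (x.1 - x.2)) ε P
        ⊆ (fun μ => μ.map (A * Ap).mulVec) ''
            ambiguitySet (fun y => cc (Ap.mulVec y.1 - Ap.mulVec y.2)) ε (P.map A.mulVec))
      ∧ ((fun μ => μ.map (A * Ap).mulVec) ''
            ambiguitySet (fun y => cc (Ap.mulVec y.1 - Ap.mulVec y.2)) ε (P.map A.mulVec)
          = (fun μ => μ.map A.mulVec) ''
              ambiguitySet (fun x => cc (x.1 - x.2)) ε (P.map (Ap * A).mulVec))
      ∧ ((fun μ => μ.map A.mulVec) ''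
            ambiguitySet (fun x => cc (x.1 - x.2)) ε (P.map (Ap * A).mulVec)
          ⊆ ambiguitySet (fun y => cc (Ap.mulVec y.1 - Ap.mulVec y.2)) ε (P.map A.mulVec)) :=
  pushforward_ambiguity_linear_chain_general X A Ap h1 h3 cc hortho P ε
end
end

section
/- Let P, Q ∈ P(ℝⁿ), let p ≥ 1, and let ĉ : ℝⁿ → [0,∞) be Borel, defining the translation-invariant cost c(x₁,x₂) = ĉ(x₁ − x₂), such that ĉ^{1/p} satisfies the triangle inequality: ĉ(x₁ − x₃)^{1/p} ≤ ĉ(x₁ − x₂)^{1/p} + ĉ(x₂ − x₃)^{1/p} for all x₁, x₂, x₃ ∈ ℝⁿ. Then for all ε₁, ε₂ ≥ 0: B_{ε₁}^ĉ(P) ∗ B_{ε₂}^ĉ(Q) ⊆ B_{(ε₁^{1/p} + ε₂^{1/p})^p}^ĉ(P ∗ Q). -/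
open MeasureTheory
open scoped ENNReal

noncomputable section

/-- Convolution of two measures on `ℝⁿ`: pushforward of the product measure under addition. -/
def mconv {n : ℕ} (P Q : Measure (Fin n → ℝ)) : Measure (Fin n → ℝ) :=
  (P.prod Q).map (fun p => p.1 + p.2)


/-! Couple `P ∗ Q` with `P' ∗ Q'` by adding two near-optimal couplings `γ₁` of `(P, P')` and
`γ₂` of `(Q, Q')` coordinatewise, i.e. by the convolution `γ₁ ∗ γ₂` on `ℝⁿ × ℝⁿ`. By
translation invariance and the triangle inequality for `ĉ^{1/p}`, the cost of the sum is at most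
`(ĉ(x₁ - x₂)^{1/p} + ĉ(y₁ - y₂)^{1/p})^p`, and Minkowski's inequality in `L^p(γ₁ ⊗ γ₂)` bounds
the `1/p`-th power of its integral by the sum of the `1/p`-th powers of the two costs. -/

open ENNReal

instance Prod.instMeasurableAdd₂ {M N : Type*} [Add M] [Add N] [MeasurableSpace M]
    [MeasurableSpace N] [MeasurableAdd₂ M] [MeasurableAdd₂ N] : MeasurableAdd₂ (M × N) :=
  ⟨(measurable_fst.fst.add measurable_snd.fst).prodMk (measurable_fst.snd.add measurable_snd.snd)⟩

theorem ENNReal.biInf_rpow {ι : Type*} (s : Set ι) (f : ι → ℝ≥0∞) {c : ℝ} (hc : 0 < c) :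
    (⨅ i ∈ s, f i) ^ c = ⨅ i ∈ s, f i ^ c := by
  simp only [iInf_subtype']
  exact (orderIsoRpow c hc).map_iInf _

theorem lintegral_prod_add_rpow_le {α β : Type*} [MeasurableSpace α] [MeasurableSpace β]
    {μ : Measure α} {ν : Measure β} [IsProbabilityMeasure μ] [IsProbabilityMeasure ν]
    {f : α → ℝ≥0∞} {g : β → ℝ≥0∞} (hf : Measurable f) (hg : Measurable g) {p : ℝ} (hp : 1 ≤ p) :
    (∫⁻ z, (f z.1 + g z.2) ^ p ∂μ.prod ν) ^ (1 / p) ≤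
      (∫⁻ x, f x ^ p ∂μ) ^ (1 / p) + (∫⁻ y, g y ^ p ∂ν) ^ (1 / p) := by
  rw [← (measurePreserving_fst (μ := μ) (ν := ν)).lintegral_comp (hf.pow_const p),
    ← (measurePreserving_snd (μ := μ) (ν := ν)).lintegral_comp (hg.pow_const p)]
  exact lintegral_Lp_add_le (hf.comp measurable_fst).aemeasurable
    (hg.comp measurable_snd).aemeasurable hp

section TranslationInvariantCost

variable {X : Type*} [AddCommGroup X] {c : X → ℝ≥0∞} {p : ℝ}

theorem rpow_cost_add_sub_add_le
    (htri : ∀ x₁ x₂ x₃ : X, c (x₁ - x₃) ^ (1 / p) ≤ c (x₁ - x₂) ^ (1 / p) + c (x₂ - x₃) ^ (1 / p))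
    (x₁ x₂ y₁ y₂ : X) :
    c ((x₁ + y₁) - (x₂ + y₂)) ^ (1 / p) ≤ c (x₁ - x₂) ^ (1 / p) + c (y₁ - y₂) ^ (1 / p) := by
  simpa only [add_sub_add_right_eq_sub, add_sub_add_left_eq_sub] using
    htri (x₁ + y₁) (x₂ + y₁) (x₂ + y₂)

variable [MeasurableSpace X] [MeasurableAdd₂ X]

theorem conv_mem_couplings {P P' Q Q' : Measure X} {γ₁ γ₂ : Measure (X × X)}
    (h₁ : γ₁ ∈ couplings P P') (h₂ : γ₂ ∈ couplings Q Q') :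
    γ₁ ∗ γ₂ ∈ couplings (P ∗ Q) (P' ∗ Q') := by
  obtain ⟨hγ₁, rfl, rfl⟩ := h₁
  obtain ⟨hγ₂, rfl, rfl⟩ := h₂
  exact ⟨Measure.probabilitymeasure_of_probabilitymeasures_conv γ₁ γ₂,
    Measure.map_conv_addMonoidHom (AddMonoidHom.fst X X) measurable_fst,
    Measure.map_conv_addMonoidHom (AddMonoidHom.snd X X) measurable_snd⟩

variable [MeasurableSub₂ X]

theorem lintegral_cost_conv_rpow_le (hp : 1 ≤ p) (hc : Measurable c)
    (htri : ∀ x₁ x₂ x₃ : X, c (x₁ - x₃) ^ (1 / p) ≤ c (x₁ - x₂) ^ (1 / p) + c (x₂ - x₃) ^ (1 / p))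
    (γ₁ γ₂ : Measure (X × X)) [IsProbabilityMeasure γ₁] [IsProbabilityMeasure γ₂] :
    (∫⁻ z, c (z.1 - z.2) ∂γ₁ ∗ γ₂) ^ (1 / p) ≤
      (∫⁻ z, c (z.1 - z.2) ∂γ₁) ^ (1 / p) + (∫⁻ z, c (z.1 - z.2) ∂γ₂) ^ (1 / p) := by
  have hp₀ : p ≠ 0 := (zero_lt_one.trans_le hp).ne'
  have hroot (x : ℝ≥0∞) : (x ^ (1 / p)) ^ p = x := by rw [one_div, rpow_inv_rpow hp₀]
  have hcost : Measurable fun z : X × X => c (z.1 - z.2) ^ (1 / p) := by fun_prop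
  calc (∫⁻ z, c (z.1 - z.2) ∂γ₁ ∗ γ₂) ^ (1 / p)
      ≤ (∫⁻ z, (c (z.1.1 - z.1.2) ^ (1 / p) + c (z.2.1 - z.2.2) ^ (1 / p)) ^ p
          ∂γ₁.prod γ₂) ^ (1 / p) := by
        rw [Measure.lintegral_conv_eq_lintegral_sum (by fun_prop)]
        gcongr with z
        rw [← hroot (c _)]
        gcongr
        exact rpow_cost_add_sub_add_le htri ..
    _ ≤ _ := by simpa only [hroot] using lintegral_prod_add_rpow_le hcost hcost hp

theorem OTCost_conv_rpow_le (hp : 1 ≤ p) (hc : Measurable c)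
    (htri : ∀ x₁ x₂ x₃ : X, c (x₁ - x₃) ^ (1 / p) ≤ c (x₁ - x₂) ^ (1 / p) + c (x₂ - x₃) ^ (1 / p))
    (P P' Q Q' : Measure X) :
    OTCost (fun z => c (z.1 - z.2)) (P ∗ Q) (P' ∗ Q') ^ (1 / p) ≤
      OTCost (fun z => c (z.1 - z.2)) P P' ^ (1 / p) +
        OTCost (fun z => c (z.1 - z.2)) Q Q' ^ (1 / p) := by
  have hp₀ : 0 < 1 / p := one_div_pos.mpr (zero_lt_one.trans_le hp)
  simp only [OTCost, biInf_rpow _ _ hp₀]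
  refine le_iInf₂_add_iInf₂ fun γ₁ h₁ γ₂ h₂ => ?_
  have : IsProbabilityMeasure γ₁ := h₁.1
  have : IsProbabilityMeasure γ₂ := h₂.1
  exact (iInf₂_le _ (conv_mem_couplings h₁ h₂)).trans (lintegral_cost_conv_rpow_le hp hc htri γ₁ γ₂)

end TranslationInvariantCost

theorem conv_ambiguity_subset_general
    {n : ℕ} (P Q : Measure (Fin n → ℝ))
    (p : ℝ) (hp : 1 ≤ p)
    (cc : (Fin n → ℝ) → ℝ≥0∞) (hcc : Measurable cc)
    (htri : ∀ x₁ x₂ x₃ : Fin n → ℝ,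
      cc (x₁ - x₃) ^ (1 / p) ≤ cc (x₁ - x₂) ^ (1 / p) + cc (x₂ - x₃) ^ (1 / p))
    (ε₁ ε₂ : ℝ≥0∞) :
    Set.image2 mconv
        (ambiguitySet (fun x => cc (x.1 - x.2)) ε₁ P)
        (ambiguitySet (fun x => cc (x.1 - x.2)) ε₂ Q)
      ⊆ ambiguitySet (fun x => cc (x.1 - x.2))
          ((ε₁ ^ (1 / p) + ε₂ ^ (1 / p)) ^ p) (mconv P Q) := by
  rintro _ ⟨P', ⟨hP', hPP'⟩, Q', ⟨hQ', hQQ'⟩, rfl⟩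
  have hp₀ : p ≠ 0 := (zero_lt_one.trans_le hp).ne'
  refine ⟨Measure.probabilitymeasure_of_probabilitymeasures_conv P' Q', ?_⟩
  rw [← rpow_inv_rpow hp₀ (OTCost _ _ _), ← one_div]
  gcongr
  calc OTCost (fun x => cc (x.1 - x.2)) (P ∗ Q) (P' ∗ Q') ^ (1 / p)
      ≤ _ := OTCost_conv_rpow_le hp hcc htri P P' Q Q'
    _ ≤ ε₁ ^ (1 / p) + ε₂ ^ (1 / p) := by gcongr

/-- The convolution of two OT ambiguity sets is contained in an OT ambiguity set around the
convolution of the centers, with radius `(ε₁^{1/p} + ε₂^{1/p})^p`. -/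
theorem conv_ambiguity_subset
    {n : ℕ} (P Q : Measure (Fin n → ℝ))
    [IsProbabilityMeasure P] [IsProbabilityMeasure Q]
    (p : ℝ) (hp : 1 ≤ p)
    (cc : (Fin n → ℝ) → ℝ≥0∞) (hcc : Measurable cc) (hfin : ∀ u, cc u ≠ ∞)
    (htri : ∀ x₁ x₂ x₃ : Fin n → ℝ,
      cc (x₁ - x₃) ^ (1 / p) ≤ cc (x₁ - x₂) ^ (1 / p) + cc (x₂ - x₃) ^ (1 / p))
    (ε₁ ε₂ : ℝ≥0∞) :
    Set.image2 mconv
        (ambiguitySet (fun x => cc (x.1 - x.2)) ε₁ P)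
        (ambiguitySet (fun x => cc (x.1 - x.2)) ε₂ Q)
      ⊆ ambiguitySet (fun x => cc (x.1 - x.2))
          ((ε₁ ^ (1 / p) + ε₂ ^ (1 / p)) ^ p) (mconv P Q) :=
  conv_ambiguity_subset_general P Q p hp cc hcc htri ε₁ ε₂
end
end

section
/- Let P₁, P₂, Q ∈ P(ℝⁿ) and let ĉ : ℝⁿ → [0,∞) be Borel, defining the translation-invariant cost c(x₁,x₂) = ĉ(x₁ − x₂), such that ĉ(x₁·x₃ − x₂·x₃) ≤ ĉ(x₁ − x₂) ĉ(x₃) for all x₁, x₂, x₃ ∈ ℝⁿ, where · denotes the entrywise product. Then W_ĉ(P₁ ⊙ Q, P₂ ⊙ Q) ≤ W_ĉ(P₁, P₂) · ∫_{ℝⁿ} ĉ(x) dQ(x). -/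
open MeasureTheory
open scoped ENNReal

noncomputable section

/-- Hadamard product of two measures on `ℝⁿ`: pushforward of the product measure under the
entrywise product. -/
def mhad {n : ℕ} (P Q : Measure (Fin n → ℝ)) : Measure (Fin n → ℝ) :=
  (P.prod Q).map (fun p => p.1 * p.2)

/-!
Draw `y ∼ Q` and `(x₁, x₂)` from a coupling of `P₁` and `P₂`, and transport `x₁ * y` to
`x₂ * y`. By the submultiplicativity of `cc` this costs at most `∫ cc (x₁ - x₂) · cc y`. The
infimum defining the OT cost need not be attained and `∫⁻ cc ∂Q` may be infinite, so the coupling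
is chosen depending on `y`: `ε / (⌊cc y⌋ + 1)`-optimal, which keeps the total error below `ε`.
-/

open ProbabilityTheory

section Couplings

variable {X : Type*} [MeasurableSpace X]

lemma OTCost_le_lintegral {c : X × X → ℝ≥0∞} {P Q : Measure X} {γ : Measure (X × X)}
    (hγ : γ ∈ couplings P Q) : OTCost c P Q ≤ ∫⁻ x, c x ∂γ :=
  iInf₂_le γ hγ

lemma prod_mem_couplings (P Q : Measure X) [IsProbabilityMeasure P] [IsProbabilityMeasure Q] :
    P.prod Q ∈ couplings P Q :=
  ⟨inferInstance, Measure.fst_prod, Measure.snd_prod⟩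

lemma exists_mem_couplings_lintegral_le_OTCost_add (c : X × X → ℝ≥0∞) (P Q : Measure X)
    [IsProbabilityMeasure P] [IsProbabilityMeasure Q] {δ : ℝ≥0∞} (hδ : δ ≠ 0) :
    ∃ γ ∈ couplings P Q, ∫⁻ x, c x ∂γ ≤ OTCost c P Q + δ := by
  by_cases htop : OTCost c P Q = ∞
  · exact ⟨P.prod Q, prod_mem_couplings P Q, by simp [htop]⟩
  obtain ⟨γ, hγ, hlt⟩ : ∃ γ ∈ couplings P Q, ∫⁻ x, c x ∂γ < OTCost c P Q + δ := by
    simpa only [OTCost, iInf_lt_iff, exists_prop] using ENNReal.lt_add_right htop hδ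
  exact ⟨γ, hγ, hlt.le⟩

end Couplings

section Hadamard

variable {n : ℕ}

local notation "E" => Fin n → ℝ

def hadamardPlan (Q : Measure E) (κ : Kernel E (E × E)) : Measure (E × E) :=
  (Q ⊗ₘ κ).map fun p => (p.2.1 * p.1, p.2.2 * p.1)

lemma map_compProd_mul_eq_mhad (Q : Measure E) [SFinite Q] {κ : Kernel E (E × E)}
    [IsSFiniteKernel κ] {g : E × E → E} (hg : Measurable g) {P : Measure E} [SFinite P]
    (hκ : ∀ y, (κ y).map g = P) :
    (Q ⊗ₘ κ).map (fun p => g p.2 * p.1) = mhad P Q := by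
  have hκg : κ.map g = Kernel.const E P := by
    ext1 y
    rw [Kernel.map_apply κ hg, hκ, Kernel.const_apply]
  calc (Q ⊗ₘ κ).map (fun p => g p.2 * p.1)
      = ((Q ⊗ₘ κ).map (Prod.map id g)).map (fun p => p.2 * p.1) := by
        rw [Measure.map_map (by fun_prop) (by fun_prop)]
        rfl
    _ = ((Q.prod P).map Prod.swap).map (fun p => p.1 * p.2) := by
        rw [← Measure.compProd_map hg, hκg, Measure.compProd_const,
          Measure.map_map (by fun_prop) measurable_swap]
        rfl
    _ = mhad P Q := by rw [Measure.prod_swap]; rfl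

lemma hadamardPlan_mem_couplings {P₁ P₂ Q : Measure E} [IsProbabilityMeasure P₁]
    [IsProbabilityMeasure P₂] [IsProbabilityMeasure Q] {κ : Kernel E (E × E)}
    (hκ : ∀ y, κ y ∈ couplings P₁ P₂) :
    hadamardPlan Q κ ∈ couplings (mhad P₁ Q) (mhad P₂ Q) := by
  have : IsMarkovKernel κ := ⟨fun y => (hκ y).1⟩
  refine ⟨Measure.isProbabilityMeasure_map (by fun_prop), ?_, ?_⟩
  · rw [hadamardPlan, Measure.map_map measurable_fst (by fun_prop)]
    exact map_compProd_mul_eq_mhad Q measurable_fst fun y => (hκ y).2.1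
  · rw [hadamardPlan, Measure.map_map measurable_snd (by fun_prop)]
    exact map_compProd_mul_eq_mhad Q measurable_snd fun y => (hκ y).2.2

lemma lintegral_hadamardPlan_le {cc : E → ℝ≥0∞} (hcc : Measurable cc)
    (hmul : ∀ x₁ x₂ x₃ : E, cc (x₁ * x₃ - x₂ * x₃) ≤ cc (x₁ - x₂) * cc x₃)
    (Q : Measure E) [SFinite Q] (κ : Kernel E (E × E)) [IsSFiniteKernel κ] :
    ∫⁻ x, cc (x.1 - x.2) ∂(hadamardPlan Q κ)
      ≤ ∫⁻ y, (∫⁻ x, cc (x.1 - x.2) ∂(κ y)) * cc y ∂Q := by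
  rw [hadamardPlan, lintegral_map (by fun_prop) (by fun_prop),
    Measure.lintegral_compProd (by fun_prop)]
  refine lintegral_mono fun y => ?_
  rw [← lintegral_mul_const _ (by fun_prop)]
  exact lintegral_mono fun x => hmul x.1 x.2 y

end Hadamard

lemma ENNReal.div_floor_add_one_mul_le (ε : ℝ≥0∞) {a : ℝ≥0∞} (ha : a ≠ ∞) :
    ε / (⌊a.toNNReal⌋₊ + 1 : ℕ) * a ≤ ε := by
  have hfloor : a ≤ (⌊a.toNNReal⌋₊ + 1 : ℕ) := by
    rw [← ENNReal.coe_toNNReal ha]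
    exact_mod_cast (Nat.lt_floor_add_one a.toNNReal).le
  exact (mul_le_mul_right hfloor _).trans_eq
    (ENNReal.div_mul_cancel (by simp) (ENNReal.natCast_ne_top _))

/-- The OT discrepancy between Hadamard products with a common measure is bounded by the OT
discrepancy of the factors times the mean cost of the common measure. -/
theorem otCost_hadamard_le
    {n : ℕ} (P₁ P₂ Q : Measure (Fin n → ℝ))
    [IsProbabilityMeasure P₁] [IsProbabilityMeasure P₂] [IsProbabilityMeasure Q]
    (cc : (Fin n → ℝ) → ℝ≥0∞) (hcc : Measurable cc) (hfin : ∀ u, cc u ≠ ∞)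
    (hmul : ∀ x₁ x₂ x₃ : Fin n → ℝ, cc (x₁ * x₃ - x₂ * x₃) ≤ cc (x₁ - x₂) * cc x₃) :
    OTCost (fun x => cc (x.1 - x.2)) (mhad P₁ Q) (mhad P₂ Q)
      ≤ OTCost (fun x => cc (x.1 - x.2)) P₁ P₂ * ∫⁻ x, cc x ∂Q := by
  set C := OTCost (fun x => cc (x.1 - x.2)) P₁ P₂
  refine ENNReal.le_of_forall_pos_le_add fun ε hε _ => ?_
  set φ : (Fin n → ℝ) → ℕ := fun y => ⌊(cc y).toNNReal⌋₊
  have hφ : Measurable φ := hcc.ennreal_toNNReal.nat_floor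
  choose γ hγ hγC using fun k : ℕ => exists_mem_couplings_lintegral_le_OTCost_add
    (fun x => cc (x.1 - x.2)) P₁ P₂ (δ := ε / (k + 1 : ℕ)) (by simpa using hε.ne')
  set κ := (Kernel.ofFunOfCountable γ).comap φ hφ
  have : IsMarkovKernel κ := ⟨fun y => (hγ (φ y)).1⟩
  calc OTCost (fun x => cc (x.1 - x.2)) (mhad P₁ Q) (mhad P₂ Q)
      ≤ ∫⁻ x, cc (x.1 - x.2) ∂(hadamardPlan Q κ) :=
        OTCost_le_lintegral (hadamardPlan_mem_couplings fun y => hγ (φ y))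
    _ ≤ ∫⁻ y, (∫⁻ x, cc (x.1 - x.2) ∂(γ (φ y))) * cc y ∂Q :=
        lintegral_hadamardPlan_le hcc hmul Q κ
    _ ≤ ∫⁻ y, C * cc y + ε / (φ y + 1 : ℕ) * cc y ∂Q :=
        lintegral_mono fun y => (mul_le_mul_left (hγC (φ y)) _).trans_eq (add_mul _ _ _)
    _ ≤ ∫⁻ y, C * cc y + ε ∂Q :=
        lintegral_mono fun y => add_le_add_right (ENNReal.div_floor_add_one_mul_le _ (hfin y)) _
    _ = C * ∫⁻ x, cc x ∂Q + ε := by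
        rw [lintegral_add_right _ measurable_const, lintegral_const_mul _ hcc]
        simp
end
end
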